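/- arXiv:1905.00721 — 4 statements merged into one kernel-verified Lean document; each statement's English description precedes it below -/
import Mathlib

section
/- Let d ≥ 1, let S ⊂ ℝ^d be a finite set whose convex hull P = conv(S) has nonempty interior, and let V be the (finite) set of extreme points of P. For each p ∈ V let E(P,p) be the external angle set of P at p. Then the sum over p ∈ V of σ(E(P,p)) equals σ(S^{d-1}), the total (d−1)-dimensional Hausdorff measure of the unit sphere. (In other words, the external angles at the vertices of a convex polytope sum to the full solid angle.) -/
/-!
Every unit vector `u` is an outer normal of `P` at some vertex: the face of `P` on which `⟪u, ·⟫`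
is maximal is compact, so it has an extreme point, which is a vertex of `P`. Conversely, a unit
vector that is an outer normal at two distinct vertices `p` and `q` is orthogonal to `p - q`, and
the unit sphere of a hyperplane is `μH[d - 1]`-null, since `μH[d - 1]` is a Haar measure on the
hyperplane. So the external angle sets at the vertices cover the sphere and overlap only in a
null set.
-/

open MeasureTheory RealInnerProductSpace

/-- The external angle set of a convex set `C` at a point `p`: the set of unit vectors `u`
with `⟪u, x − p⟫ ≤ 0` for every `x ∈ C`. -/
def externalAngleSet {d : ℕ} (C : Set (EuclideanSpace ℝ (Fin d)))
    (p : EuclideanSpace ℝ (Fin d)) : Set (EuclideanSpace ℝ (Fin d)) :=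
  {u | ‖u‖ = 1 ∧ ∀ x ∈ C, ⟪u, x - p⟫ ≤ 0}

open Metric Module

theorem hausdorffMeasure_finrank_submodule_inter_sphere {E : Type*} [NormedAddCommGroup E]
    [NormedSpace ℝ E] [FiniteDimensional ℝ E] [MeasurableSpace E] [BorelSpace E]
    (K : Submodule ℝ E) {r : ℝ} (hr : r ≠ 0) :
    μH[finrank ℝ K] ((K : Set E) ∩ sphere 0 r) = 0 := by
  have hK : (K : Set E) ∩ sphere 0 r = K.subtype '' sphere (0 : K) r := by
    ext x
    constructor
    · rintro ⟨hxK, hx⟩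
      exact ⟨⟨x, hxK⟩, by simpa using hx, rfl⟩
    · rintro ⟨y, hy, rfl⟩
      exact ⟨y.2, by simpa using hy⟩
  rw [hK, isometry_subtype_coe.hausdorffMeasure_image (Or.inl (Nat.cast_nonneg _))]
  exact Measure.addHaar_sphere_of_ne_zero _ 0 hr

theorem hausdorffMeasure_orthogonal_span_inter_sphere {E : Type*} [NormedAddCommGroup E]
    [InnerProductSpace ℝ E] [MeasurableSpace E] [BorelSpace E] {n : ℕ}
    [Fact (finrank ℝ E = n + 1)] {v : E} (hv : v ≠ 0) {r : ℝ} (hr : r ≠ 0) :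
    μH[n] (((ℝ ∙ v)ᗮ : Set E) ∩ sphere 0 r) = 0 := by
  have : FiniteDimensional ℝ E := .of_fact_finrank_eq_succ n
  have h := hausdorffMeasure_finrank_submodule_inter_sphere (ℝ ∙ v)ᗮ hr
  rwa [Submodule.finrank_orthogonal_span_singleton (n := n) hv] at h

variable {d : ℕ}

theorem isClosed_externalAngleSet (C : Set (EuclideanSpace ℝ (Fin d)))
    (p : EuclideanSpace ℝ (Fin d)) : IsClosed (externalAngleSet C p) := by
  have : externalAngleSet C p = sphere 0 1 ∩ ⋂ x ∈ C, {u | ⟪u, x - p⟫ ≤ 0} := by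
    ext u; simp [externalAngleSet]
  rw [this]
  exact isClosed_sphere.inter <| isClosed_biInter fun x _ ↦
    isClosed_le (continuous_id.inner continuous_const) continuous_const

theorem externalAngleSet_inter_subset {C : Set (EuclideanSpace ℝ (Fin d))}
    {p q : EuclideanSpace ℝ (Fin d)} (hp : p ∈ C) (hq : q ∈ C) :
    externalAngleSet C p ∩ externalAngleSet C q ⊆ ((ℝ ∙ (p - q))ᗮ : Set _) ∩ sphere 0 1 := by
  rintro u ⟨⟨hu, hup⟩, -, huq⟩
  refine ⟨?_, by simpa using hu⟩
  rw [SetLike.mem_coe, Submodule.mem_orthogonal_singleton_iff_inner_right]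
  have h₁ := hup q hq
  have h₂ := huq p hp
  rw [inner_sub_right] at h₁ h₂
  rw [inner_sub_left, real_inner_comm u p, real_inner_comm u q]
  linarith

theorem aedisjoint_externalAngleSet {C : Set (EuclideanSpace ℝ (Fin d))}
    {p q : EuclideanSpace ℝ (Fin d)} (hp : p ∈ C) (hq : q ∈ C) (hpq : p ≠ q) :
    AEDisjoint μH[(d : ℝ) - 1] (externalAngleSet C p) (externalAngleSet C q) := by
  obtain ⟨n, rfl⟩ : ∃ n, d = n + 1 := Nat.exists_eq_succ_of_ne_zero <| by
    rintro rfl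
    exact hpq (Subsingleton.elim p q)
  have : Fact (finrank ℝ (EuclideanSpace ℝ (Fin (n + 1))) = n + 1) := ⟨by simp⟩
  refine measure_mono_null (externalAngleSet_inter_subset hp hq) ?_
  simpa using hausdorffMeasure_orthogonal_span_inter_sphere (sub_ne_zero.2 hpq) one_ne_zero

theorem biUnion_extremePoints_externalAngleSet {C : Set (EuclideanSpace ℝ (Fin d))}
    (hC : IsCompact C) (hne : C.Nonempty) :
    ⋃ p ∈ C.extremePoints ℝ, externalAngleSet C p = sphere 0 1 := by
  refine (Set.iUnion₂_subset fun p _ u hu ↦ mem_sphere_zero_iff_norm.2 hu.1).antisymm ?_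
  intro u hu
  set F := {x ∈ C | ∀ y ∈ C, innerSL ℝ u y ≤ innerSL ℝ u x}
  have hF : IsExposed ℝ C F := fun _ ↦ ⟨innerSL ℝ u, rfl⟩
  obtain ⟨x, hxC, hx⟩ := hC.exists_isMaxOn hne (innerSL ℝ u).continuous.continuousOn
  obtain ⟨p, hp⟩ := (hF.isCompact hC).extremePoints_nonempty ⟨x, hxC, fun y hy ↦ hx hy⟩
  refine Set.mem_biUnion (hF.isExtreme.extremePoints_subset_extremePoints hp)
    ⟨mem_sphere_zero_iff_norm.1 hu, fun y hy ↦ ?_⟩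
  have := hp.1.2 y hy
  rw [innerSL_apply_apply, innerSL_apply_apply] at this
  rw [inner_sub_right]
  linarith

theorem sum_external_angles_general (d : ℕ) (S : Set (EuclideanSpace ℝ (Fin d)))
    (hS : S.Finite) (hint : (interior (convexHull ℝ S)).Nonempty) :
    ∑' p : (convexHull ℝ S).extremePoints ℝ,
        μH[(d : ℝ) - 1] (externalAngleSet (convexHull ℝ S) (p : EuclideanSpace ℝ (Fin d)))
      = μH[(d : ℝ) - 1] (Metric.sphere (0 : EuclideanSpace ℝ (Fin d)) 1) := by
  have hV : ((convexHull ℝ S).extremePoints ℝ).Finite := hS.subset extremePoints_convexHull_subset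
  rw [← biUnion_extremePoints_externalAngleSet (hS.isCompact_convexHull ℝ)
      (hint.mono interior_subset),
    measure_biUnion₀ hV.countable
      (fun p hp q hq ↦ aedisjoint_externalAngleSet hp.1 hq.1)
      (fun p _ ↦ (isClosed_externalAngleSet _ p).nullMeasurableSet)]

/-- For a `d`-dimensional polytope `P = conv S` with nonempty interior, the external
angles at the vertices (extreme points) of `P` sum to the total `(d−1)`-dimensional Hausdorff
measure of the unit sphere `S^{d-1}`. -/
theorem sum_external_angles (d : ℕ) (hd : 1 ≤ d) (S : Set (EuclideanSpace ℝ (Fin d)))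
    (hS : S.Finite) (hint : (interior (convexHull ℝ S)).Nonempty) :
    ∑' p : (convexHull ℝ S).extremePoints ℝ,
        μH[(d : ℝ) - 1] (externalAngleSet (convexHull ℝ S) (p : EuclideanSpace ℝ (Fin d)))
      = μH[(d : ℝ) - 1] (Metric.sphere (0 : EuclideanSpace ℝ (Fin d)) 1) :=
  sum_external_angles_general d S hS hint
end

section
/- Let d ≥ 1 be an integer and let x be a real number with x ≥ d + 1. Then |(d+1)²·x/(d+1+x) − d(d+1)| = (d+1)·|x − d(d+1)|/(d+1+x) ≤ (1/2)·|x − d(d+1)|. -/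
/-- For integer `d ≥ 1` and real `x ≥ d + 1`,
`|(d+1)²·x/(d+1+x) − d(d+1)| = (d+1)·|x − d(d+1)|/(d+1+x) ≤ (1/2)·|x − d(d+1)|`. -/
theorem iterated_foam_contraction (d : ℕ) (hd : 1 ≤ d) (x : ℝ) (hx : (d : ℝ) + 1 ≤ x) :
    |((d : ℝ) + 1) ^ 2 * x / ((d : ℝ) + 1 + x) - (d : ℝ) * ((d : ℝ) + 1)|
      = ((d : ℝ) + 1) * |x - (d : ℝ) * ((d : ℝ) + 1)| / ((d : ℝ) + 1 + x) ∧
    ((d : ℝ) + 1) * |x - (d : ℝ) * ((d : ℝ) + 1)| / ((d : ℝ) + 1 + x)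
      ≤ (1 / 2) * |x - (d : ℝ) * ((d : ℝ) + 1)| := by
  have hD : (0:ℝ) < (d : ℝ) + 1 := by positivity
  have hden : (0:ℝ) < (d : ℝ) + 1 + x := by linarith
  constructor
  · have key : ((d : ℝ) + 1) ^ 2 * x / ((d : ℝ) + 1 + x) - (d : ℝ) * ((d : ℝ) + 1)
        = ((d : ℝ) + 1) * (x - (d : ℝ) * ((d : ℝ) + 1)) / ((d : ℝ) + 1 + x) := by
      field_simp
      ring
    rw [key, abs_div, abs_mul, abs_of_pos hD, abs_of_pos hden]
  · rw [div_le_iff₀ hden]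
    have habs : (0:ℝ) ≤ |x - (d : ℝ) * ((d : ℝ) + 1)| := abs_nonneg _
    nlinarith [mul_le_mul_of_nonneg_left hx habs]
end

section
/- Let d ≥ 1 be an integer and let (v_k) be a sequence of real numbers with v_0 ≥ d + 1 and v_{k+1} = (d+1)²·v_k/(d+1+v_k) for all k ≥ 0. Then v_k ≥ d + 1 for all k, and the sequence (v_k) converges to d(d+1). -/
/-- If `d ≥ 1`, `v 0 ≥ d + 1` and `v (k+1) = (d+1)²·v k/(d+1+v k)`, then
`v k ≥ d + 1` for all `k`, and `v k → d(d+1)`. -/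
theorem iterated_foam_limit (d : ℕ) (hd : 1 ≤ d) (v : ℕ → ℝ)
    (h0 : (d : ℝ) + 1 ≤ v 0)
    (hrec : ∀ k, v (k + 1) = ((d : ℝ) + 1) ^ 2 * v k / ((d : ℝ) + 1 + v k)) :
    (∀ k, (d : ℝ) + 1 ≤ v k) ∧
    Filter.Tendsto v Filter.atTop (nhds ((d : ℝ) * ((d : ℝ) + 1))) := by
  set c : ℝ := (d : ℝ) + 1 with hcdef
  have hd1 : (1 : ℝ) ≤ (d : ℝ) := by exact_mod_cast hd
  have hc2 : (2 : ℝ) ≤ c := by simp only [hcdef]; linarith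
  clear_value c
  have hcpos : (0 : ℝ) < c := by linarith
  have hlb : ∀ k, c ≤ v k := by
    intro k
    induction k with
    | zero => exact h0
    | succ k ih =>
      have hvpos : 0 < v k := lt_of_lt_of_le (by linarith) ih
      have hden : 0 < c + v k := by linarith
      rw [hrec k, le_div_iff₀ hden]
      nlinarith [mul_pos hcpos hvpos, mul_le_mul_of_nonneg_left ih hcpos.le]
  refine ⟨hlb, ?_⟩
  have hvpos : ∀ k, 0 < v k := fun k => lt_of_lt_of_le (by linarith) (hlb k)
  set A : ℝ := (c * (c - 1))⁻¹ with hA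
  clear_value A
  have hc1 : c - 1 ≠ 0 := by intro h; linarith [sub_eq_zero.mp h]
  have hcne : c ≠ 0 := ne_of_gt hcpos
  have hcc : c * (c - 1) ≠ 0 := mul_ne_zero hcne hc1
  have step : ∀ k, (v (k + 1))⁻¹ = (v k)⁻¹ / c + (c ^ 2)⁻¹ := by
    intro k
    have hvk := (hvpos k).ne'
    have hden : c + v k ≠ 0 := by have := hvpos k; intro h; linarith
    rw [hrec k]
    field_simp
  have hAid : A / c + (c ^ 2)⁻¹ = A := by
    rw [hA]
    field_simp
    ring
  have key : ∀ k, (v k)⁻¹ = A + ((v 0)⁻¹ - A) * (c⁻¹) ^ k := by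
    intro k
    induction k with
    | zero => simp
    | succ k ih =>
      rw [step k, ih, pow_succ]
      calc (A + ((v 0)⁻¹ - A) * c⁻¹ ^ k) / c + (c ^ 2)⁻¹
          = (A / c + (c ^ 2)⁻¹) + ((v 0)⁻¹ - A) * (c⁻¹ ^ k * c⁻¹) := by ring
        _ = A + ((v 0)⁻¹ - A) * (c⁻¹ ^ k * c⁻¹) := by rw [hAid]
  have hlt : c⁻¹ < 1 := by
    rw [inv_lt_one_iff₀]; right; linarith
  have hge : (0 : ℝ) ≤ c⁻¹ := by positivity
  have h1 : Filter.Tendsto (fun k : ℕ => A + ((v 0)⁻¹ - A) * (c⁻¹) ^ k)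
      Filter.atTop (nhds (A + ((v 0)⁻¹ - A) * 0)) :=
    Filter.Tendsto.const_add _ (Filter.Tendsto.const_mul _
      (tendsto_pow_atTop_nhds_zero_of_lt_one hge hlt))
  rw [mul_zero, add_zero] at h1
  have htend : Filter.Tendsto (fun k => (v k)⁻¹) Filter.atTop (nhds A) :=
    h1.congr fun k => (key k).symm
  have hAne : A ≠ 0 := hA ▸ inv_ne_zero hcc
  have hfin : Filter.Tendsto (fun k => ((v k)⁻¹)⁻¹) Filter.atTop (nhds A⁻¹) :=
    htend.inv₀ hAne
  have heq : ((d : ℝ) * c) = A⁻¹ := by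
    rw [hA, inv_inv, hcdef]; ring
  rw [heq]
  exact hfin.congr fun k => inv_inv (v k)
end

section
/- Let d ≥ 1 be an integer and let (v_k) be a sequence of real numbers with v_0 ≥ d + 1 and v_{k+1} = (d+1)²·v_k/(d+1+v_k) for all k ≥ 0. Define h_k = (d+1)·v_k/((d+1) + v_k). Then the sequence (h_k) converges to d. -/
/-- If `d ≥ 1`, `v 0 ≥ d + 1` and `v (k+1) = (d+1)²·v k/(d+1+v k)`, then the
harmonic degrees `h k = (d+1)·v k/((d+1)+v k)` converge to `d`. -/
theorem iterated_foam_harmonic_limit (d : ℕ) (hd : 1 ≤ d) (v : ℕ → ℝ)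
    (h0 : (d : ℝ) + 1 ≤ v 0)
    (hrec : ∀ k, v (k + 1) = ((d : ℝ) + 1) ^ 2 * v k / ((d : ℝ) + 1 + v k)) :
    Filter.Tendsto (fun k => ((d : ℝ) + 1) * v k / (((d : ℝ) + 1) + v k))
      Filter.atTop (nhds (d : ℝ)) := by
  have hd1 : (1 : ℝ) ≤ (d : ℝ) := by exact_mod_cast hd
  set n : ℝ := (d : ℝ) + 1 with hn
  have hn2 : (2 : ℝ) ≤ n := by linarith
  have hnpos : (0 : ℝ) < n := by linarith
  have hdpos : (0 : ℝ) < (d : ℝ) := by linarith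
  -- v k ≥ n for all k
  have hv : ∀ k, n ≤ v k := by
    intro k
    induction k with
    | zero => exact h0
    | succ k ih =>
      rw [hrec k]
      rw [le_div_iff₀ (by linarith)]
      have hB : n * n ≤ n * v k := mul_le_mul_of_nonneg_left ih hnpos.le
      nlinarith [mul_le_mul_of_nonneg_right hB (by linarith : (0:ℝ) ≤ n - 1),
        mul_nonneg (mul_nonneg hnpos.le hnpos.le) (by linarith : (0:ℝ) ≤ n - 2)]
  have hvpos : ∀ k, (0 : ℝ) < v k := fun k => lt_of_lt_of_le hnpos (hv k)
  -- A k = n / v k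
  set A : ℕ → ℝ := fun k => n / v k with hA
  have hArec : ∀ k, A (k + 1) = (A k + 1) / n := by
    intro k
    have h1 : v k ≠ 0 := (hvpos k).ne'
    have h2 : n + v k ≠ 0 := by have := hvpos k; positivity
    simp only [hA, hrec k]
    field_simp
  have hAform : ∀ k, A k - 1 / d = (A 0 - 1 / d) * (1 / n) ^ k := by
    intro k
    induction k with
    | zero => simp
    | succ k ih =>
      rw [hArec k, pow_succ]
      have hdne : (d : ℝ) ≠ 0 := hdpos.ne'
      have hnne : n ≠ 0 := hnpos.ne'
      have : (A k + 1) / n - 1 / d = (A k - 1 / d) * (1 / n) := by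
        field_simp
        ring
      rw [this, ih]
      ring
  -- A tends to 1/d
  have hAtend : Filter.Tendsto A Filter.atTop (nhds (1 / (d:ℝ))) := by
    have h1 : Filter.Tendsto (fun k : ℕ => (1 / n) ^ k) Filter.atTop (nhds 0) := by
      apply tendsto_pow_atTop_nhds_zero_of_lt_one
      · positivity
      · rw [div_lt_one hnpos]; linarith
    have h2 : Filter.Tendsto (fun k => 1 / (d:ℝ) + (A 0 - 1 / d) * (1 / n) ^ k)
        Filter.atTop (nhds (1 / (d:ℝ))) := by
      have := (h1.const_mul (A 0 - 1 / d)).const_add (1 / (d:ℝ))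
      simpa using this
    refine h2.congr fun k => ?_
    have := hAform k
    linarith
  -- rewrite h k = n / (1 + A k)
  have hkey : ∀ k, n * v k / (n + v k) = n / (1 + A k) := by
    intro k
    have h1 : v k ≠ 0 := (hvpos k).ne'
    have h2 : n + v k ≠ 0 := by have := hvpos k; positivity
    simp only [hA]
    rw [div_eq_div_iff h2 (by
      have : 0 < 1 + n / v k := by have := hvpos k; positivity
      exact this.ne')]
    field_simp
    ring
  have hlim : Filter.Tendsto (fun k => n / (1 + A k)) Filter.atTop (nhds (d : ℝ)) := by
    have hden : (1 : ℝ) + 1 / d ≠ 0 := by have := hdpos; positivity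
    have := Filter.Tendsto.div (tendsto_const_nhds (x := n) (f := Filter.atTop (α := ℕ)))
      ((hAtend.const_add 1)) hden
    have heq : n / (1 + 1 / (d:ℝ)) = (d : ℝ) := by
      rw [hn]; field_simp
    rwa [heq] at this
  exact hlim.congr fun k => (hkey k).symm
end
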